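/- Let C₀ be a linear binary code of length n whose even-weight part together with its complement forms an equitable 2-partition of the halved n-cube with quotient matrix [[a,b],[c,d]] (i.e. (C₀, V∖C₀) is equitable where C₀ ⊆ even-weight words is a linear code). For any integer t with 1 ≤ t < 2^{n−1}/|C₀|, the union of any t distinct cosets of C₀ inside the even-weight words, together with its complement, is an equitable 2-partition of the halved n-cube with quotient matrix [[a+(t−1)c, b−(t−1)c],[tc, d−(t−1)c]]. -/

import Mathlib

open Finset

/-- The hypercube graph on binary words indexed by `ι`. -/
def cube (ι : Type*) [Fintype ι] [DecidableEq ι] : SimpleGraph (ι → ZMod 2) where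
  Adj x y := hammingDist x y = 1
  symm := ⟨fun x y h => by simpa only [hammingDist_comm] using h⟩
  loopless := ⟨fun x h => by simp [hammingDist_self] at h⟩

instance (ι : Type*) [Fintype ι] [DecidableEq ι] : DecidableRel (cube ι).Adj :=
  fun x y => inferInstanceAs (Decidable (hammingDist x y = 1))

/-- The halved hypercube: even-weight words, adjacent iff Hamming distance 2. -/
def halvedCube (ι : Type*) [Fintype ι] [DecidableEq ι] :
    SimpleGraph {x : ι → ZMod 2 // Even (hammingDist x 0)} where
  Adj x y := hammingDist x.1 y.1 = 2
  symm := ⟨fun x y h => by simpa only [hammingDist_comm] using h⟩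
  loopless := ⟨fun x h => by simp [hammingDist_self] at h⟩

instance (ι : Type*) [Fintype ι] [DecidableEq ι] : DecidableRel (halvedCube ι).Adj :=
  fun x y => inferInstanceAs (Decidable (hammingDist x.1 y.1 = 2))

variable {V : Type*} [Fintype V] [DecidableEq V]

/-- Number of neighbors of `v` in the set `C`. -/
def nbrCount (G : SimpleGraph V) [DecidableRel G.Adj] (v : V) (C : Finset V) : ℕ :=
  (C.filter (G.Adj v)).card

/-- `(C0, C1)` is an equitable 2-partition with quotient matrix `[[a,b],[c,d]]`. -/
def IsEquitable2 (G : SimpleGraph V) [DecidableRel G.Adj] (C0 C1 : Finset V)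
    (a b c d : ℕ) : Prop :=
  Disjoint C0 C1 ∧ C0 ∪ C1 = Finset.univ ∧
  (∀ v ∈ C0, nbrCount G v C0 = a ∧ nbrCount G v C1 = b) ∧
  (∀ v ∈ C1, nbrCount G v C0 = c ∧ nbrCount G v C1 = d)

/-- `C` is an equitable `k`-partition with quotient matrix `S`. -/
def IsEquitableK (G : SimpleGraph V) [DecidableRel G.Adj] {k : ℕ}
    (C : V → Fin k) (S : Fin k → Fin k → ℕ) : Prop :=
  ∀ (v : V) (j : Fin k),
    (Finset.univ.filter (fun w => G.Adj v w ∧ C w = j)).card = S (C v) j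

/-!
Translation by an even-weight word `u` is an automorphism of the halved cube carrying the coset
`u + C₀` onto `C₀`, so every coset of `C₀` is a cell of an equitable 2-partition with the same
quotient matrix `[[a,b],[c,d]]`. Since the chosen cosets are pairwise disjoint, a vertex in one
of them has `a` neighbours in its own coset and `c` in each of the other `t - 1`, while a vertex
outside all of them has `c` neighbours in each; the degree (`a + b` resp. `c + d`) then gives the
counts in the complement.
-/

section EquitablePartition

variable {V W ι : Type*} {G : SimpleGraph V} [DecidableRel G.Adj]

lemma nbrCount_union_of_disjoint [DecidableEq V] (v : V) {s t : Finset V} (h : Disjoint s t) :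
    nbrCount G v (s ∪ t) = nbrCount G v s + nbrCount G v t := by
  rw [nbrCount, filter_union, card_union_of_disjoint (disjoint_filter_filter h)]
  rfl

lemma nbrCount_biUnion [DecidableEq V] (v : V) {T : Finset ι} {S : ι → Finset V}
    (h : (T : Set ι).PairwiseDisjoint S) :
    nbrCount G v (T.biUnion S) = ∑ x ∈ T, nbrCount G v (S x) := by
  rw [nbrCount, filter_biUnion, card_biUnion fun x hx y hy hxy ↦
    disjoint_filter_filter (h hx hy hxy)]
  rfl

variable [Fintype V] [DecidableEq W] {G' : SimpleGraph W} [DecidableRel G'.Adj]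

lemma nbrCount_comap (φ : G ≃g G') (v : V) (u : Finset W) :
    nbrCount G v {w | φ w ∈ u} = nbrCount G' (φ v) u :=
  card_equiv φ.toEquiv fun w ↦ by
    simp only [mem_filter, mem_univ, true_and]
    exact and_congr_right' φ.map_adj_iff.symm

variable [DecidableEq V] [Fintype W] {s t : Finset V} {a b c d : ℕ}

lemma IsEquitable2.mem_right_of_notMem_left (h : IsEquitable2 G s t a b c d) {v : V}
    (hv : v ∉ s) : v ∈ t :=
  (mem_union.1 (h.2.1.symm ▸ mem_univ v)).resolve_left hv

lemma IsEquitable2.nbrCount_left (h : IsEquitable2 G s t a b c d) (v : V) :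
    nbrCount G v s = if v ∈ s then a else c := by
  split_ifs with hv
  · exact (h.2.2.1 v hv).1
  · exact (h.2.2.2 v (h.mem_right_of_notMem_left hv)).1

lemma IsEquitable2.nbrCount_univ (h : IsEquitable2 G s t a b c d) (v : V) :
    nbrCount G v univ = if v ∈ s then a + b else c + d := by
  rw [← h.2.1, nbrCount_union_of_disjoint v h.1]
  split_ifs with hv
  · rw [(h.2.2.1 v hv).1, (h.2.2.1 v hv).2]
  · have hvt := h.mem_right_of_notMem_left hv
    rw [(h.2.2.2 v hvt).1, (h.2.2.2 v hvt).2]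

lemma IsEquitable2.comap (φ : G ≃g G') {s t : Finset W} (h : IsEquitable2 G' s t a b c d) :
    IsEquitable2 G {v | φ v ∈ s} {v | φ v ∈ t} a b c d := by
  refine ⟨disjoint_filter.2 fun v _ hs ht ↦ disjoint_left.1 h.1 hs ht, ?_, ?_, ?_⟩
  · rw [← filter_or, filter_true_of_mem fun v _ ↦ mem_union.1 (h.2.1.symm ▸ mem_univ (φ v))]
  all_goals
    intro v hv
    rw [mem_filter] at hv
    simp only [nbrCount_comap]
  · exact h.2.2.1 _ hv.2
  · exact h.2.2.2 _ hv.2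

theorem IsEquitable2.biUnion [DecidableEq ι] {T : Finset ι} {S R : ι → Finset V}
    (hdisj : (T : Set ι).PairwiseDisjoint S) (hT : T.Nonempty)
    (hS : ∀ x ∈ T, IsEquitable2 G (S x) (R x) a b c d) :
    IsEquitable2 G (T.biUnion S) (T.biUnion S)ᶜ
      (a + (#T - 1) * c) (b - (#T - 1) * c) (#T * c) (d - (#T - 1) * c) := by
  have hcount (v : V) : nbrCount G v (T.biUnion S) = ∑ x ∈ T, if v ∈ S x then a else c := by
    rw [nbrCount_biUnion v hdisj]
    exact sum_congr rfl fun x hx ↦ (hS x hx).nbrCount_left v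
  have hsplit (v : V) :
      nbrCount G v (T.biUnion S) + nbrCount G v (T.biUnion S)ᶜ = nbrCount G v univ := by
    rw [← nbrCount_union_of_disjoint v disjoint_compl_right, union_compl]
  refine ⟨disjoint_compl_right, union_compl _, fun v hv ↦ ?_, fun v hv ↦ ?_⟩
  · obtain ⟨x₀, hx₀, hvx₀⟩ := mem_biUnion.1 hv
    have hin : nbrCount G v (T.biUnion S) = a + (#T - 1) * c := by
      rw [hcount, ← add_sum_erase T _ hx₀, if_pos hvx₀, sum_congr rfl fun x hx ↦ if_neg
        fun hvx ↦ (mem_erase.1 hx).1 (hdisj.elim_finset (mem_erase.1 hx).2 hx₀ v hvx hvx₀),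
        sum_const, card_erase_of_mem hx₀, smul_eq_mul]
    have hdeg := hsplit v
    rw [(hS x₀ hx₀).nbrCount_univ v, if_pos hvx₀] at hdeg
    omega
  · have hvS : ∀ x ∈ T, v ∉ S x := fun x hx hvx ↦ mem_compl.1 hv (mem_biUnion.2 ⟨x, hx, hvx⟩)
    obtain ⟨x₀, hx₀⟩ := hT
    have hout : nbrCount G v (T.biUnion S) = #T * c := by
      rw [hcount, sum_congr rfl fun x hx ↦ if_neg (hvS x hx), sum_const, smul_eq_mul]
    have hdeg := hsplit v
    rw [(hS x₀ hx₀).nbrCount_univ v, if_neg (hvS x₀ hx₀)] at hdeg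
    have hTc : #T * c = c + (#T - 1) * c := by
      rw [Nat.sub_one_mul, Nat.add_sub_cancel' (Nat.le_mul_of_pos_left c (card_pos.2 ⟨x₀, hx₀⟩))]
    omega

end EquitablePartition

section HalvedCube

variable {ι : Type*}

lemma add_self_eq_zero_of_zmodTwo (x : ι → ZMod 2) : x + x = 0 :=
  funext fun i ↦ CharTwo.add_self_eq_zero (x i)

variable [Fintype ι]

lemma hammingDist_add_right {β : ι → Type*} [∀ i, AddGroup (β i)] [∀ i, DecidableEq (β i)]
    (x y u : ∀ i, β i) : hammingDist (x + u) (y + u) = hammingDist x y := by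
  simp only [hammingDist, Pi.add_apply, ne_eq, add_left_inj]

lemma even_hammingDist_zero_iff_sum_eq_zero (x : ι → ZMod 2) :
    Even (hammingDist x 0) ↔ ∑ i, x i = 0 := by
  have hbool (z : ZMod 2) : z = if z ≠ 0 then 1 else 0 := by revert z; decide
  rw [hammingDist_zero_right, hammingNorm, ← ZMod.natCast_eq_zero_iff_even, natCast_card_filter,
    ← sum_congr rfl fun i _ ↦ hbool (x i)]

lemma even_hammingDist_zero_add {x y : ι → ZMod 2} (hx : Even (hammingDist x 0))
    (hy : Even (hammingDist y 0)) : Even (hammingDist (x + y) 0) := by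
  rw [even_hammingDist_zero_iff_sum_eq_zero] at *
  simp only [Pi.add_apply, sum_add_distrib, hx, hy, add_zero]

variable [DecidableEq ι]

def halvedCube.translate (u : ι → ZMod 2) (hu : Even (hammingDist u 0)) :
    halvedCube ι ≃g halvedCube ι where
  toFun v := ⟨v.1 + u, even_hammingDist_zero_add v.2 hu⟩
  invFun v := ⟨v.1 + u, even_hammingDist_zero_add v.2 hu⟩
  left_inv v := Subtype.ext <| by simp [add_assoc, add_self_eq_zero_of_zmodTwo]
  right_inv v := Subtype.ext <| by simp [add_assoc, add_self_eq_zero_of_zmodTwo]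
  map_rel_iff' {v w} := by
    change hammingDist (v.1 + u) (w.1 + u) = 2 ↔ hammingDist v.1 w.1 = 2
    rw [hammingDist_add_right]

@[simp]
lemma halvedCube.coe_translate (u : ι → ZMod 2) (hu : Even (hammingDist u 0))
    (v : {x : ι → ZMod 2 // Even (hammingDist x 0)}) : (translate u hu v).1 = v.1 + u :=
  rfl

lemma IsEquitable2.translate {C : Finset (ι → ZMod 2)} {a b c d : ℕ}
    (h : IsEquitable2 (halvedCube ι) {v | v.1 ∈ C} {v | v.1 ∉ C} a b c d)
    (u : ι → ZMod 2) (hu : Even (hammingDist u 0)) :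
    IsEquitable2 (halvedCube ι) {v | v.1 + u ∈ C} {v | v.1 + u ∉ C} a b c d := by
  convert h.comap (halvedCube.translate u hu) using 2 <;>
    simp only [mem_filter, mem_univ, true_and, halvedCube.coe_translate]

end HalvedCube

theorem stmt10_general (n : ℕ) (C0 : Finset (Fin n → ZMod 2))
    (hlin : ∀ x ∈ C0, ∀ y ∈ C0, x + y ∈ C0)
    (a b c d : ℕ)
    (hEq : IsEquitable2 (halvedCube (Fin n))
      (Finset.univ.filter (fun v => v.1 ∈ C0))
      (Finset.univ.filter (fun v => v.1 ∉ C0)) a b c d)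
    (t : ℕ) (ht1 : 1 ≤ t)
    (T : Finset (Fin n → ZMod 2)) (hTcard : T.card = t)
    (hTeven : ∀ x ∈ T, Even (hammingDist x 0))
    (hTdistinct : ∀ x ∈ T, ∀ y ∈ T, x ≠ y → x + y ∉ C0) :
    IsEquitable2 (halvedCube (Fin n))
      (Finset.univ.filter (fun v => ∃ x ∈ T, ∃ y ∈ C0, v.1 = x + y))
      (Finset.univ.filter (fun v => ¬∃ x ∈ T, ∃ y ∈ C0, v.1 = x + y))
      (a + (t - 1) * c) (b - (t - 1) * c) (t * c) (d - (t - 1) * c) := by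
  set S : (Fin n → ZMod 2) → Finset {x : Fin n → ZMod 2 // Even (hammingDist x 0)} :=
    fun x ↦ {v | v.1 + x ∈ C0}
  have hdisj : (T : Set (Fin n → ZMod 2)).PairwiseDisjoint S := by
    intro x hx y hy hxy
    refine disjoint_filter.2 fun v _ hvx hvy ↦ hTdistinct x hx y hy hxy ?_
    have hsum := hlin _ hvx _ hvy
    rwa [add_add_add_comm, add_self_eq_zero_of_zmodTwo, zero_add] at hsum
  have hcoset (v : Fin n → ZMod 2) (x : Fin n → ZMod 2) : (∃ y ∈ C0, v = x + y) ↔ v + x ∈ C0 :=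
    ⟨fun ⟨y, hy, hv⟩ ↦ by simpa [hv, add_comm x, add_assoc, add_self_eq_zero_of_zmodTwo],
      fun h ↦ ⟨v + x, h, by simp [add_comm x, add_assoc, add_self_eq_zero_of_zmodTwo]⟩⟩
  have hunion : ({v | ∃ x ∈ T, ∃ y ∈ C0, v.1 = x + y} :
      Finset {x : Fin n → ZMod 2 // Even (hammingDist x 0)}) = T.biUnion S := by
    ext v
    simp only [mem_filter, mem_univ, true_and, mem_biUnion, S, hcoset]
  rw [← compl_filter, hunion, ← hTcard]
  exact IsEquitable2.biUnion hdisj (card_pos.1 (hTcard ▸ ht1))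
    fun x hx ↦ hEq.translate x (hTeven x hx)

/-- if a linear code `C₀` of even-weight words gives an equitable
2-partition `(C₀, complement)` of the halved `n`-cube with quotient matrix
`[[a,b],[c,d]]`, then the union of any `t` distinct cosets of `C₀` inside the
even-weight words (for `1 ≤ t < 2^{n-1}/|C₀|`) gives an equitable 2-partition
with quotient matrix `[[a+(t-1)c, b-(t-1)c],[tc, d-(t-1)c]]`. -/
theorem stmt10 (n : ℕ) (C0 : Finset (Fin n → ZMod 2))
    (heven : ∀ x ∈ C0, Even (hammingDist x 0))
    (hzero : (0 : Fin n → ZMod 2) ∈ C0)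
    (hlin : ∀ x ∈ C0, ∀ y ∈ C0, x + y ∈ C0)
    (a b c d : ℕ)
    (hEq : IsEquitable2 (halvedCube (Fin n))
      (Finset.univ.filter (fun v => v.1 ∈ C0))
      (Finset.univ.filter (fun v => v.1 ∉ C0)) a b c d)
    (t : ℕ) (ht1 : 1 ≤ t) (ht2 : t * C0.card < 2 ^ (n - 1))
    (T : Finset (Fin n → ZMod 2)) (hTcard : T.card = t)
    (hTeven : ∀ x ∈ T, Even (hammingDist x 0))
    (hTdistinct : ∀ x ∈ T, ∀ y ∈ T, x ≠ y → x + y ∉ C0) :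
    IsEquitable2 (halvedCube (Fin n))
      (Finset.univ.filter (fun v => ∃ x ∈ T, ∃ y ∈ C0, v.1 = x + y))
      (Finset.univ.filter (fun v => ¬∃ x ∈ T, ∃ y ∈ C0, v.1 = x + y))
      (a + (t - 1) * c) (b - (t - 1) * c) (t * c) (d - (t - 1) * c) :=
  stmt10_general n C0 hlin a b c d hEq t ht1 T hTcard hTeven hTdistinct
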